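/- If H is the parity-check matrix of a binary linear code with minimum distance at least 5, then the columns of H, viewed as binary vectors, form a symmetric 2-separable code with all columns distinct: for any four distinct columns c₁,c₂,c₃,c₄ of H, the ternary sums satisfy c₁+c₂ ≠ c₃+c₄. -/
import Mathlib


/-- Ternary addition on {0,1,2}: 0+0=0, 1+1=1, otherwise 2. -/
def tadd (a b : Fin 3) : Fin 3 :=
  if a = 0 ∧ b = 0 then 0 else if a = 1 ∧ b = 1 then 1 else 2

/-- Componentwise ternary addition. -/
def tvadd {n : ℕ} (x y : Fin n → Fin 3) : Fin n → Fin 3 := fun i => tadd (x i) (y i)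

/-- Embedding of GF(2) into the ternary alphabet. -/
def embz : ZMod 2 → Fin 3 := fun a => if a = 0 then (0 : Fin 3) else 1

/-- Embedding of GF(2)-vectors into ternary vectors. -/
def embvz {n : ℕ} (x : Fin n → ZMod 2) : Fin n → Fin 3 := fun i => embz (x i)

lemma tadd_key : ∀ a b c d : ZMod 2,
    tadd (embz a) (embz b) = tadd (embz c) (embz d) → a + b + c + d = 0 := by
  decide

/-- If every ≤4 columns of the parity-check matrix H (a code of minimum distance ≥ 5)
are linearly independent over GF(2), then distinct columns have pairwise distinct
ternary sums: the columns form a symmetric 2-separable code. -/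
theorem paritycheck_columns_separable (n N : ℕ) (H : Fin N → Fin n → ZMod 2)
    (hind : ∀ s : Finset (Fin N), s.card ≤ 4 →
      LinearIndependent (ZMod 2) (fun i : {x // x ∈ s} => H i.1))
    (c₁ c₂ c₃ c₄ : Fin N)
    (h12 : c₁ ≠ c₂) (h13 : c₁ ≠ c₃) (h14 : c₁ ≠ c₄)
    (h23 : c₂ ≠ c₃) (h24 : c₂ ≠ c₄) (h34 : c₃ ≠ c₄) :
    tvadd (embvz (H c₁)) (embvz (H c₂)) ≠ tvadd (embvz (H c₃)) (embvz (H c₄)) := by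
  intro heq
  have hsum : H c₁ + H c₂ + H c₃ + H c₄ = 0 := by
    funext i
    have hi := congrFun heq i
    simp only [tvadd, embvz] at hi
    simpa using tadd_key _ _ _ _ hi
  set s : Finset (Fin N) := {c₁, c₂, c₃, c₄} with hs
  have h1 : c₁ ∈ s := by simp [hs]
  have h2 : c₂ ∈ s := by simp [hs]
  have h3 : c₃ ∈ s := by simp [hs]
  have h4 : c₄ ∈ s := by simp [hs]
  have hcard : s.card ≤ 4 := by
    rw [hs]
    refine le_trans (Finset.card_insert_le _ _) (Nat.succ_le_succ ?_)
    refine le_trans (Finset.card_insert_le _ _) (Nat.succ_le_succ ?_)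
    refine le_trans (Finset.card_insert_le _ _) (Nat.succ_le_succ ?_)
    simp
  have hli := hind s hcard
  rw [Fintype.linearIndependent_iff] at hli
  have hsum2 : ∑ i : {x // x ∈ s}, H i.1 = 0 := by
    rw [Finset.sum_coe_sort s (fun x => H x), hs]
    rw [Finset.sum_insert (by simp [h12, h13, h14]),
        Finset.sum_insert (by simp [h23, h24]),
        Finset.sum_insert (by simp [h34]), Finset.sum_singleton]
    rw [← add_assoc, ← add_assoc]
    exact hsum
  have hzero := hli (fun _ => 1) (by simpa using hsum2) ⟨c₁, h1⟩
  exact one_ne_zero hzero
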